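/- Let M be an mtt that is finite copying in the parameters with copying bound c, let t ∈ T_Δ be a fixed output tree, and let run_OI be defined from M, t and c as in the context. Then for every s ∈ T_Σ: (s,t) ∈ τ_{OI,M} if and only if (q0, (), t) ∈ run_OI(s), where () is the empty parameter vector and t itself is the root subtree of t. -/

import Mathlib

namespace MttF

/-- Finite ordered trees over a label type `α`. -/
inductive RTree (α : Type) : Type
  | node : α → List (RTree α) → RTree α

namespace RTree

variable {α β : Type}

/-- The root label of a tree. -/
def label : RTree α → α
  | node a _ => a

/-- The list of immediate subtrees of a tree. -/
def children : RTree α → List (RTree α)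
  | node _ ts => ts

/-- Relabelling of trees. -/
def map (f : α → β) : RTree α → RTree β
  | node a ts => node (f a) (ts.attach.map (fun x => map f x.1))
decreasing_by
  have := List.sizeOf_lt_of_mem x.2
  simp only [node.sizeOf_spec]
  omega

/-- A tree is well-formed with respect to a rank function if every node labeled
by a rank-`k` symbol has exactly `k` children. `T_Σ` is the set of well-formed
trees over `Σ`. -/
inductive Wf (rk : α → ℕ) : RTree α → Prop
  | node {a : α} {ts : List (RTree α)} :
      ts.length = rk a → (∀ t ∈ ts, Wf rk t) → Wf rk (node a ts)

/-- `Subtree u t` holds iff `u` is a subtree of `t` (rooted at some node of `t`). -/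
inductive Subtree : RTree α → RTree α → Prop
  | refl (t : RTree α) : Subtree t t
  | step {u c : RTree α} {a : α} {ts : List (RTree α)} :
      c ∈ ts → Subtree u c → Subtree u (node a ts)

end RTree

/-- Labels for output trees with parameters: trees over `Δ ∪ Y`. -/
inductive OLab (Δ : Type) : Type
  | out (d : Δ)
  | param (i : ℕ)

/-- Labels for right-hand sides of mtt rules: trees over `Δ ∪ (Q × X) ∪ Y`
(the second component of a call is the index of the input variable `x`). -/
inductive RLab (Δ Q : Type) : Type
  | out (d : Δ)
  | call (q : Q) (x : ℕ)
  | param (i : ℕ)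

/-- Labels for "semantic" trees over `Δ ∪ (Q × T_Σ) ∪ Y`. -/
inductive SLab (Γ Δ Q : Type) : Type
  | out (d : Δ)
  | call (q : Q) (s : RTree Γ)
  | param (i : ℕ)

/-- Trees over `Δ ∪ Y`. -/
abbrev OT (Δ : Type) := RTree (OLab Δ)
/-- Right-hand side trees over `Δ ∪ (Q × X) ∪ Y`. -/
abbrev Rhs (Δ Q : Type) := RTree (RLab Δ Q)
/-- Trees over `Δ ∪ (Q × T_Σ) ∪ Y`. -/
abbrev ST (Γ Δ Q : Type) := RTree (SLab Γ Δ Q)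

/-- First-order substitution `x_i := ss_i` on a label of a right-hand side
(indices are 0-based; for well-formed rules the index is always in range). -/
def RLab.subst {Γ Δ Q : Type} (ss : List (RTree Γ)) : RLab Δ Q → SLab Γ Δ Q
  | .out d => .out d
  | .param i => .param i
  | .call q x =>
    match ss[x]? with
    | some s => .call q s
    | none => .param x

/-- `r[x_1/s_1, …, x_k/s_k]`. -/
def substX {Γ Δ Q : Type} (ss : List (RTree Γ)) (r : Rhs Δ Q) : ST Γ Δ Q :=
  r.map (RLab.subst ss)

/-- Second-order (parameter) substitution `t[y_1/ts_1, …, y_n/ts_n]`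
(`y` indices are 0-based). -/
def substY {Δ : Type} (ts : List (OT Δ)) : OT Δ → OT Δ
  | .node (.param i) _ => ts.getD i (.node (.param i) [])
  | .node (.out d) us => .node (.out d) (us.attach.map (fun x => substY ts x.1))
decreasing_by
  have := List.sizeOf_lt_of_mem x.2
  simp only [RTree.node.sizeOf_spec]
  omega

/-- The embedding of `T_Δ` into the trees over `Δ ∪ Y`. -/
def embed {Δ : Type} (t : RTree Δ) : OT Δ := t.map OLab.out

variable {Γ Δ Q : Type}

/-- IO (call-by-value, inside-out) semantics: `SemIO rsel u t` holds iff
`t ∈ ⟦u⟧_IO`.  The rules of the transducer are given by a selector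
`rsel q σ ss`: the set of right-hand sides of the `⟨q,σ⟩`-rules that are
applicable when the children of the current input node are `ss` (for a plain
mtt this does not depend on `ss`, cf. `plainSel`). -/
inductive SemIO (rsel : Q → Γ → List (RTree Γ) → Set (Rhs Δ Q)) :
    ST Γ Δ Q → OT Δ → Prop
  | param (i : ℕ) :
      SemIO rsel (.node (.param i) []) (.node (.param i) [])
  | out {d : Δ} {us : List (ST Γ Δ Q)} {ts : List (OT Δ)}
      (hlen : ts.length = us.length)
      (h : ∀ i : Fin us.length, SemIO rsel (us.get i) (ts.get (i.cast hlen.symm))) :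
      SemIO rsel (.node (.out d) us) (.node (.out d) ts)
  | call {q : Q} {σ : Γ} {ss : List (RTree Γ)} {us : List (ST Γ Δ Q)}
      {r : Rhs Δ Q} {t₀ : OT Δ} {ts : List (OT Δ)}
      (hr : r ∈ rsel q σ ss)
      (h₀ : SemIO rsel (substX ss r) t₀)
      (hlen : ts.length = us.length)
      (h : ∀ i : Fin us.length, SemIO rsel (us.get i) (ts.get (i.cast hlen.symm))) :
      SemIO rsel (.node (.call q (.node σ ss)) us) (substY ts t₀)

mutual
/-- OI (call-by-name, outside-in) semantics: `SemOI rsel u t` holds iff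
`t ∈ ⟦u⟧_OI`. -/
inductive SemOI (rsel : Q → Γ → List (RTree Γ) → Set (Rhs Δ Q)) :
    ST Γ Δ Q → OT Δ → Prop
  | param (i : ℕ) :
      SemOI rsel (.node (.param i) []) (.node (.param i) [])
  | out {d : Δ} {us : List (ST Γ Δ Q)} {ts : List (OT Δ)}
      (hlen : ts.length = us.length)
      (h : ∀ i : Fin us.length, SemOI rsel (us.get i) (ts.get (i.cast hlen.symm))) :
      SemOI rsel (.node (.out d) us) (.node (.out d) ts)
  | call {q : Q} {σ : Γ} {ss : List (RTree Γ)} {us : List (ST Γ Δ Q)}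
      {r : Rhs Δ Q} {t₀ : OT Δ} {t : OT Δ}
      (hr : r ∈ rsel q σ ss)
      (h₀ : SemOI rsel (substX ss r) t₀)
      (hs : OISub rsel us t₀ t) :
      SemOI rsel (.node (.call q (.node σ ss)) us) t

/-- OI-substitution: `OISub rsel us t₀ t` holds iff `t ∈ (t₀ ←_OI (⟦us_1⟧_OI, …, ⟦us_n⟧_OI))`,
i.e. `t` is obtained from `t₀` by independently replacing every occurrence of a parameter
`y_i` by some member of `⟦us_i⟧_OI`. -/
inductive OISub (rsel : Q → Γ → List (RTree Γ) → Set (Rhs Δ Q)) :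
    List (ST Γ Δ Q) → OT Δ → OT Δ → Prop
  | param {us : List (ST Γ Δ Q)} {i : ℕ} {t : OT Δ}
      (h : i < us.length) (hsem : SemOI rsel (us.get ⟨i, h⟩) t) :
      OISub rsel us (.node (.param i) []) t
  | out {us : List (ST Γ Δ Q)} {d : Δ} {ts ts' : List (OT Δ)}
      (hlen : ts'.length = ts.length)
      (h : ∀ i : Fin ts.length, OISub rsel us (ts.get i) (ts'.get (i.cast hlen.symm))) :
      OISub rsel us (.node (.out d) ts) (.node (.out d) ts')
end

/-- The rule selector of a plain mtt: the applicable rules do not depend on the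
child subtrees of the current input node. -/
def plainSel (rules : Q → Γ → Set (Rhs Δ Q)) :
    Q → Γ → List (RTree Γ) → Set (Rhs Δ Q) :=
  fun q σ _ => rules q σ

/-- The translation `τ_{IO,M} ⊆ T_Σ × T_Δ` realized in IO mode. -/
def tauIO (rankΓ : Γ → ℕ) (rankΔ : Δ → ℕ)
    (rsel : Q → Γ → List (RTree Γ) → Set (Rhs Δ Q)) (q₀ : Q) :
    Set (RTree Γ × RTree Δ) :=
  {p | p.1.Wf rankΓ ∧ p.2.Wf rankΔ ∧
       SemIO rsel (.node (.call q₀ p.1) []) (embed p.2)}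

/-- The translation `τ_{OI,M} ⊆ T_Σ × T_Δ` realized in OI mode. -/
def tauOI (rankΓ : Γ → ℕ) (rankΔ : Δ → ℕ)
    (rsel : Q → Γ → List (RTree Γ) → Set (Rhs Δ Q)) (q₀ : Q) :
    Set (RTree Γ × RTree Δ) :=
  {p | p.1.Wf rankΓ ∧ p.2.Wf rankΔ ∧
       SemOI rsel (.node (.call q₀ p.1) []) (embed p.2)}

/-- Well-formedness of a right-hand side of a rule of an mtt whose current
input symbol has rank `k` and whose current state has rank `m`: output symbols
have the correct number of children, state calls `⟨q', x_i⟩` have `rank q'`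
children and `i < k`, and parameters `y_j` satisfy `j < m`. -/
inductive RhsWf (rankΔ : Δ → ℕ) (rankQ : Q → ℕ) (k m : ℕ) : Rhs Δ Q → Prop
  | out {d : Δ} {ts : List (Rhs Δ Q)}
      (hlen : ts.length = rankΔ d) (h : ∀ t ∈ ts, RhsWf rankΔ rankQ k m t) :
      RhsWf rankΔ rankQ k m (.node (.out d) ts)
  | call {q : Q} {x : ℕ} {ts : List (Rhs Δ Q)}
      (hx : x < k) (hlen : ts.length = rankQ q)
      (h : ∀ t ∈ ts, RhsWf rankΔ rankQ k m t) :
      RhsWf rankΔ rankQ k m (.node (.call q x) ts)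
  | param {i : ℕ} (hi : i < m) : RhsWf rankΔ rankQ k m (.node (.param i) [])

/-- Well-formedness of a tree over `Δ ∪ (Q × T_Σ) ∪ Y`. -/
inductive STWf (rankΓ : Γ → ℕ) (rankΔ : Δ → ℕ) (rankQ : Q → ℕ) : ST Γ Δ Q → Prop
  | out {d : Δ} {ts : List (ST Γ Δ Q)}
      (hlen : ts.length = rankΔ d) (h : ∀ t ∈ ts, STWf rankΓ rankΔ rankQ t) :
      STWf rankΓ rankΔ rankQ (.node (.out d) ts)
  | call {q : Q} {s : RTree Γ} {ts : List (ST Γ Δ Q)}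
      (hs : s.Wf rankΓ) (hlen : ts.length = rankQ q)
      (h : ∀ t ∈ ts, STWf rankΓ rankΔ rankQ t) :
      STWf rankΓ rankΔ rankQ (.node (.call q s) ts)
  | param (i : ℕ) : STWf rankΓ rankΔ rankQ (.node (.param i) [])

/-- A tree over `Δ ∪ (Q × T_Σ) ∪ Y` is parameter-free if no `y_i` occurs in it. -/
inductive NoParam : ST Γ Δ Q → Prop
  | node {l : SLab Γ Δ Q} {ts : List (ST Γ Δ Q)}
      (hl : ∀ i : ℕ, l ≠ .param i) (h : ∀ t ∈ ts, NoParam t) :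
      NoParam (.node l ts)

/-- A macro tree transducer `M = (Q, Σ, Δ, q₀, R)`.  The alphabets `Γ` (input),
`Δ` (output) and the set `Q` of states are ranked; `q₀` has rank `0`; `rules q σ`
is the (finite) set `R_{q,σ}` of right-hand sides of the `⟨q,σ⟩`-rules, and every
right-hand side is a well-formed tree over `Δ ∪ (Q × X_k) ∪ Y_m`. -/
structure MTT (Γ Δ Q : Type) where
  rankΓ : Γ → ℕ
  rankΔ : Δ → ℕ
  rankQ : Q → ℕ
  q₀ : Q
  q₀_rank : rankQ q₀ = 0
  rules : Q → Γ → Set (Rhs Δ Q)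
  rules_fin : ∀ q σ, (rules q σ).Finite
  rules_wf : ∀ q σ, ∀ r ∈ rules q σ, RhsWf rankΔ rankQ (rankΓ σ) (rankQ q) r

/-- The rule selector of a plain mtt. -/
def MTT.sel (M : MTT Γ Δ Q) : Q → Γ → List (RTree Γ) → Set (Rhs Δ Q) :=
  plainSel M.rules

end MttF
namespace MttF

/-- The number of occurrences of the parameter `y_i` in a tree over `Δ ∪ Y`. -/
def countParam {Δ : Type} (i : ℕ) : OT Δ → ℕ
  | .node (.param j) _ => if j = i then 1 else 0
  | .node (.out _) ts => (ts.attach.map (fun x => countParam i x.1)).sum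
decreasing_by
  have := List.sizeOf_lt_of_mem x.2
  simp only [RTree.node.sizeOf_spec]
  omega

/-- The argument list `(y_1, …, y_m)`. -/
def paramArgs {Γ Δ Q : Type} (m : ℕ) : List (ST Γ Δ Q) :=
  (List.range m).map (fun i => .node (.param i) [])

/-- `M` is finite copying in the parameters with copying bound `c`: for every
state `q` of rank `k`, every `s ∈ T_Σ`, and every `u ∈ ⟦⟨q,s⟩(y_1,…,y_k)⟧_OI`,
the number of occurrences of `y_i` in `u` is at most `c`. -/
def FinCopyP {Γ Δ Q : Type} (M : MTT Γ Δ Q) (c : ℕ) : Prop :=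
  ∀ (q : Q) (s : RTree Γ), s.Wf M.rankΓ →
    ∀ u : OT Δ, SemOI M.sel (.node (.call q s) (paramArgs (M.rankQ q))) u →
      ∀ i < M.rankQ q, countParam i u ≤ c

/-- Triples `(q, β⃗, v') ∈ ⋃_i Q^{(i)} × P_c(V_t)^i × V_t`. -/
abbrev TripOI (Δ Q : Type) := Q × List (Set (RTree Δ)) × RTree Δ

/-- `β ∈ P_c(V_t)`: a set of at most `c` subtrees of `t`. -/
def SmallSet {Δ : Type} (t : RTree Δ) (c : ℕ) (β : Set (RTree Δ)) : Prop :=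
  (∀ w ∈ β, RTree.Subtree w t) ∧ β.ncard ≤ c

/-- The predicate `f_{β⃗,a⃗}(r, v')` of the inverse-type construction for
OI-mtts that are finite copying in the parameters. -/
inductive FPredOI {Δ Q : Type} (t : RTree Δ) (βs : List (Set (RTree Δ)))
    (aenv : List (Set (TripOI Δ Q))) : Rhs Δ Q → RTree Δ → Prop
  | param {i : ℕ} {v : RTree Δ} {β : Set (RTree Δ)}
      (h : βs[i]? = some β) (hv : v ∈ β) :
      FPredOI t βs aenv (.node (.param i) []) v
  | out {d : Δ} {rs : List (Rhs Δ Q)} {ws : List (RTree Δ)}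
      (hlen : ws.length = rs.length)
      (h : ∀ i : Fin rs.length, FPredOI t βs aenv (rs.get i) (ws.get (i.cast hlen.symm))) :
      FPredOI t βs aenv (.node (.out d) rs) (.node d ws)
  | call {q' : Q} {x : ℕ} {rs : List (Rhs Δ Q)} {v : RTree Δ}
      (γs : List (Set (RTree Δ)))
      (hlen : γs.length = rs.length)
      (ha : (q', γs, v) ∈ aenv.getD x ∅)
      (h : ∀ i : Fin rs.length, ∀ u ∈ γs.get (i.cast hlen.symm),
            FPredOI t βs aenv (rs.get i) u) :
      FPredOI t βs aenv (.node (.call q' x) rs) v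

/-- The run `run_OI(s)` of the inverse-type automaton of an OI-mtt that is
finite copying in the parameters with bound `c`, for the fixed output tree `t`:
`run_OI(σ(s_1,…,s_k)) = {(q, β⃗, v') | ∃ r ∈ R_{q,σ}: f_{β⃗,(run_OI(s_1),…,run_OI(s_k))}(r, v')}`. -/
def runOI {Γ Δ Q : Type} (rankQ : Q → ℕ)
    (rsel : Q → Γ → List (RTree Γ) → Set (Rhs Δ Q)) (t : RTree Δ) (c : ℕ) :
    RTree Γ → Set (TripOI Δ Q)
  | .node σ ss =>
      {trip | trip.2.1.length = rankQ trip.1 ∧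
        (∀ β ∈ trip.2.1, SmallSet t c β) ∧ RTree.Subtree trip.2.2 t ∧
        ∃ r ∈ rsel trip.1 σ ss,
          FPredOI t trip.2.1 (ss.attach.map (fun x => runOI rankQ rsel t c x.1)) r trip.2.2}
decreasing_by
  have := List.sizeOf_lt_of_mem x.2
  simp only [RTree.node.sizeOf_spec]
  omega

end MttF

/-!
By induction on the input tree, `run_OI(s)` consists exactly of the triples `(q, β⃗, v')` with
`v' ∈ u ←_OI (β_1, …, β_m)` for some `u ∈ ⟦⟨q,s⟩(y_1,…,y_m)⟧_OI`, all `β_i` being sets of at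
most `c` subtrees of `t`. The only nontrivial case is a call `⟨q', x_j⟩(r_1, …, r_l)` in a
right-hand side. An OI value of it is an OI value `t₀` of `⟨q', s_j⟩(y_1, …, y_l)` in which every
occurrence of `y_k` is independently replaced by an OI value of `r_k`. Collecting in `γ_k` the
subtrees of `v'` produced at the occurrences of `y_k` yields the intermediate vector `γ⃗` of `f`;
finite copying bounds the number of these occurrences, hence `|γ_k| ≤ c`. Conversely, values
witnessing `f` for the members of the `γ_k` can be substituted back into `t₀`. For the initial
state, of rank 0, the invariant says `t ∈ ⟦⟨q₀, s⟩⟧_OI`.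
-/

open List (Forall₂)

namespace List

variable {α β γ : Type*} {R : α → β → Prop} {S : β → γ → Prop}

theorem forall₂_iff_get_cast {l₁ : List α} {l₂ : List β} :
    Forall₂ R l₁ l₂ ↔
      ∃ h : l₂.length = l₁.length, ∀ i : Fin l₁.length, R (l₁.get i) (l₂.get (i.cast h.symm)) := by
  rw [forall₂_iff_get]
  exact ⟨fun ⟨h, H⟩ => ⟨h.symm, fun i => H _ _ _⟩, fun ⟨h, H⟩ => ⟨h.symm, fun i h₁ _ => H ⟨i, h₁⟩⟩⟩

theorem forall₂_comp_iff {l₁ : List α} {l₃ : List γ} :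
    Forall₂ (Relation.Comp R S) l₁ l₃ ↔ ∃ l₂, Forall₂ R l₁ l₂ ∧ Forall₂ S l₂ l₃ := by
  constructor
  · intro h
    induction h with
    | nil => exact ⟨[], .nil, .nil⟩
    | cons hac _ ih =>
      obtain ⟨b, hab, hbc⟩ := hac
      obtain ⟨l₂, h₁, h₂⟩ := ih
      exact ⟨b :: l₂, .cons hab h₁, .cons hbc h₂⟩
  · rintro ⟨l₂, h₁, h₂⟩
    induction h₁ generalizing l₃ with
    | nil => cases h₂; exact .nil
    | cons hab _ ih => cases h₂ with | cons hbc h₂ => exact .cons ⟨_, hab, hbc⟩ (ih h₂)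

theorem Forall₂.imp_of_mem {R' : α → β → Prop} {l₁ : List α} {l₂ : List β}
    (H : ∀ a ∈ l₁, ∀ b ∈ l₂, R a b → R' a b) (h : Forall₂ R l₁ l₂) : Forall₂ R' l₁ l₂ := by
  induction h with
  | nil => exact .nil
  | cons hab _ ih =>
    exact .cons (H _ mem_cons_self _ mem_cons_self hab)
      (ih fun a ha b hb => H a (mem_cons_of_mem _ ha) b (mem_cons_of_mem _ hb))

theorem Forall₂.forall_mem_right {P : β → Prop} {l₁ : List α} {l₂ : List β}
    (h : Forall₂ (fun _ b => P b) l₁ l₂) : ∀ b ∈ l₂, P b := by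
  induction h with
  | nil => simp
  | cons hb _ ih => exact forall_mem_cons.2 ⟨hb, ih⟩

theorem mem_getD_empty_iff {l : List (Set α)} {k : ℕ} {a : α} :
    a ∈ l.getD k ∅ ↔ ∃ hk : k < l.length, a ∈ l[k] := by
  rcases lt_or_ge k l.length with hk | hk
  · simp [hk]
  · simp [not_lt.2 hk]

theorem getD_map_range (f : ℕ → α) (d : α) (n k : ℕ) :
    ((range n).map f).getD k d = if k < n then f k else d := by
  rcases lt_or_ge k n with hk | hk
  · simp [getD_eq_getElem?_getD, hk]
  · simp [getD_eq_getElem?_getD, not_lt.2 hk]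

end List

namespace MttF

namespace RTree

variable {α β : Type}

@[simp]
theorem map_node (f : α → β) (a : α) (ts : List (RTree α)) :
    (node a ts).map f = node (f a) (ts.map (map f)) := by
  rw [map]
  simp

@[elab_as_elim]
theorem rec_mem {P : RTree α → Prop} (h : ∀ a ts, (∀ t ∈ ts, P t) → P (node a ts)) :
    ∀ t, P t
  | node a ts => h a ts fun t _ => rec_mem h t

theorem Subtree.trans {a b c : RTree α} (h₁ : Subtree a b) (h₂ : Subtree b c) : Subtree a c := by
  induction h₂ with
  | refl => exact h₁
  | step hm _ ih => exact .step hm ih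

theorem Subtree.of_mem {u : RTree α} {a : α} {ts : List (RTree α)} (h : u ∈ ts) :
    Subtree u (node a ts) :=
  .step h (.refl u)

end RTree

open RTree (Subtree)

variable {Γ Δ Q : Type}

theorem substX_node (ss : List (RTree Γ)) (l : RLab Δ Q) (rs : List (Rhs Δ Q)) :
    substX ss (.node l rs) = .node (l.subst ss) (rs.map (substX ss)) :=
  RTree.map_node _ _ _

theorem RLab.subst_call {ss : List (RTree Γ)} {x : ℕ} (hx : x < ss.length) (q : Q) :
    (RLab.call q x : RLab Δ Q).subst ss = .call q ss[x] := by
  simp [RLab.subst, hx]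

theorem countParam_out {k : ℕ} {d : Δ} {ts : List (OT Δ)} :
    countParam k (.node (.out d) ts) = (ts.map (countParam k)).sum := by
  rw [countParam]
  simp

theorem countParam_param {k i : ℕ} {ts : List (OT Δ)} :
    countParam k (.node (.param i) ts : OT Δ) = if i = k then 1 else 0 := by
  rw [countParam]

@[simp]
theorem MTT.sel_apply (M : MTT Γ Δ Q) (q : Q) (σ : Γ) (ss : List (RTree Γ)) :
    M.sel q σ ss = M.rules q σ :=
  rfl

section Inversion

variable {rsel : Q → Γ → List (RTree Γ) → Set (Rhs Δ Q)}

theorem semOI_param_iff {i : ℕ} {u : OT Δ} :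
    SemOI rsel (.node (.param i) []) u ↔ u = .node (.param i) [] := by
  constructor
  · rintro ⟨⟩
    rfl
  · rintro rfl
    exact .param i

theorem semOI_out_iff {d : Δ} {us : List (ST Γ Δ Q)} {u : OT Δ} :
    SemOI rsel (.node (.out d) us) u ↔
      ∃ ts, u = .node (.out d) ts ∧ Forall₂ (SemOI rsel) us ts := by
  constructor
  · intro h
    cases h with
    | out hlen h => exact ⟨_, rfl, List.forall₂_iff_get_cast.2 ⟨hlen, h⟩⟩
  · rintro ⟨ts, rfl, h⟩
    obtain ⟨hlen, h⟩ := List.forall₂_iff_get_cast.1 h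
    exact .out hlen h

theorem semOI_call_iff_exists_rule {q : Q} {s : RTree Γ} {us : List (ST Γ Δ Q)} {u : OT Δ} :
    SemOI rsel (.node (.call q s) us) u ↔
      ∃ r ∈ rsel q s.label s.children, ∃ t₀,
        SemOI rsel (substX s.children r) t₀ ∧ OISub rsel us t₀ u := by
  obtain ⟨σ, ss⟩ := s
  constructor
  · intro h
    cases h with
    | call hr h₀ hsub => exact ⟨_, hr, _, h₀, hsub⟩
  · rintro ⟨r, hr, t₀, h₀, hsub⟩
    exact .call hr h₀ hsub

theorem oisub_param_iff {us : List (ST Γ Δ Q)} {i : ℕ} {u : OT Δ} :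
    OISub rsel us (.node (.param i) []) u ↔ ∃ hi : i < us.length, SemOI rsel us[i] u := by
  constructor
  · rintro ⟨hi, hsem⟩
    exact ⟨hi, hsem⟩
  · rintro ⟨hi, hsem⟩
    exact .param hi hsem

theorem oisub_out_iff {us : List (ST Γ Δ Q)} {d : Δ} {ts : List (OT Δ)} {u : OT Δ} :
    OISub rsel us (.node (.out d) ts) u ↔
      ∃ ts', u = .node (.out d) ts' ∧ Forall₂ (OISub rsel us) ts ts' := by
  constructor
  · intro h
    cases h with
    | out hlen h => exact ⟨_, rfl, List.forall₂_iff_get_cast.2 ⟨hlen, h⟩⟩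
  · rintro ⟨ts', rfl, h⟩
    obtain ⟨hlen, h⟩ := List.forall₂_iff_get_cast.1 h
    exact .out hlen h

variable {t : RTree Δ} {βs : List (Set (RTree Δ))} {aenv : List (Set (TripOI Δ Q))}

theorem fPredOI_param_iff {i : ℕ} {v : RTree Δ} :
    FPredOI t βs aenv (.node (.param i) []) v ↔ v ∈ βs.getD i ∅ := by
  rw [List.getD_eq_getElem?_getD]
  constructor
  · rintro ⟨h, hv⟩
    rwa [h]
  · intro hv
    cases h : βs[i]? with
    | none => simp [h] at hv
    | some β => exact .param h (by simpa [h] using hv)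

theorem fPredOI_out_iff {d : Δ} {rs : List (Rhs Δ Q)} {v : RTree Δ} :
    FPredOI t βs aenv (.node (.out d) rs) v ↔
      ∃ ws, v = .node d ws ∧ Forall₂ (FPredOI t βs aenv) rs ws := by
  constructor
  · intro h
    cases h with
    | out hlen h => exact ⟨_, rfl, List.forall₂_iff_get_cast.2 ⟨hlen, h⟩⟩
  · rintro ⟨ws, rfl, h⟩
    obtain ⟨hlen, h⟩ := List.forall₂_iff_get_cast.1 h
    exact .out hlen h

theorem fPredOI_call_iff {q : Q} {x : ℕ} {rs : List (Rhs Δ Q)} {v : RTree Δ} :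
    FPredOI t βs aenv (.node (.call q x) rs) v ↔
      ∃ γs, (q, γs, v) ∈ aenv.getD x ∅ ∧
        Forall₂ (fun r γ => ∀ w ∈ γ, FPredOI t βs aenv r w) rs γs := by
  constructor
  · intro h
    cases h with
    | call γs hlen ha h => exact ⟨γs, ha, List.forall₂_iff_get_cast.2 ⟨hlen, h⟩⟩
  · rintro ⟨γs, ha, h⟩
    obtain ⟨hlen, h⟩ := List.forall₂_iff_get_cast.1 h
    exact .call γs hlen ha h

end Inversion

inductive ParamsLT (m : ℕ) : OT Δ → Prop
  | out {d : Δ} {ts : List (OT Δ)} (h : ∀ t ∈ ts, ParamsLT m t) : ParamsLT m (.node (.out d) ts)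
  | param {i : ℕ} (hi : i < m) : ParamsLT m (.node (.param i) [])

section ParamsLT

variable {rsel : Q → Γ → List (RTree Γ) → Set (Rhs Δ Q)} {m : ℕ}

theorem paramsLT_of_oisub {us : List (ST Γ Δ Q)}
    (hus : ∀ (k : ℕ) (hk : k < us.length) (u : OT Δ), SemOI rsel us[k] u → ParamsLT m u) :
    ∀ (t₀ : OT Δ) {u : OT Δ}, OISub rsel us t₀ u → ParamsLT m u := by
  refine RTree.rec_mem fun l ts ih u h => ?_
  cases h with
  | param hk hsem => exact hus _ hk _ hsem
  | out hlen h =>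
    refine .out (List.Forall₂.forall_mem_right (l₁ := ts) ?_)
    exact (List.forall₂_iff_get_cast.2 ⟨hlen, h⟩).imp_of_mem fun t ht _ _ => ih t ht

theorem paramsLT_of_semOI_substX {rankΔ : Δ → ℕ} {rankQ : Q → ℕ} {ss : List (RTree Γ)}
    {r : Rhs Δ Q} (hr : RhsWf rankΔ rankQ ss.length m r) {u : OT Δ}
    (h : SemOI rsel (substX ss r) u) : ParamsLT m u := by
  induction hr generalizing u with
  | @out d rs _ _ ih =>
    rw [substX_node] at h
    obtain ⟨ts, rfl, hts⟩ := semOI_out_iff.1 h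
    refine .out (List.Forall₂.forall_mem_right (l₁ := rs) ?_)
    exact (List.forall₂_map_left_iff.1 hts).imp_of_mem fun r hr _ _ => ih r hr
  | call hx _ _ ih =>
    rw [substX_node, RLab.subst_call hx, semOI_call_iff_exists_rule] at h
    obtain ⟨-, -, t₀, -, hsub⟩ := h
    refine paramsLT_of_oisub (fun k hk u hu => ?_) t₀ hsub
    simp only [List.getElem_map] at hu
    exact ih _ (List.getElem_mem _) hu
  | param hi =>
    simp only [substX_node, RLab.subst, List.map_nil, semOI_param_iff] at h
    rw [h]
    exact .param hi

theorem oisub_paramArgs_iff {t₀ : OT Δ} (h : ParamsLT m t₀) {u : OT Δ} :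
    OISub rsel (paramArgs m) t₀ u ↔ u = t₀ := by
  induction h generalizing u with
  | out _ ih =>
    rw [oisub_out_iff]
    constructor
    · rintro ⟨ts', rfl, h⟩
      have := h.imp_of_mem fun t ht t' _ h => ((ih t ht).1 h).symm
      rw [List.forall₂_eq_eq_eq] at this
      rw [this]
    · rintro rfl
      exact ⟨_, rfl, List.forall₂_same.2 fun t ht => (ih t ht).2 rfl⟩
  | param hi =>
    simp [oisub_param_iff, semOI_param_iff, paramArgs, hi]

end ParamsLT

section Call

variable (M : MTT Γ Δ Q) {q : Q} {s : RTree Γ}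

theorem semOI_call_paramArgs_iff (hs : s.Wf M.rankΓ) {u : OT Δ} :
    SemOI M.sel (.node (.call q s) (paramArgs (M.rankQ q))) u ↔
      ∃ r ∈ M.rules q s.label, SemOI M.sel (substX s.children r) u := by
  rw [semOI_call_iff_exists_rule, MTT.sel_apply]
  refine exists_congr fun r => and_congr_right fun hr => ?_
  have hwf : RhsWf M.rankΔ M.rankQ s.children.length (M.rankQ q) r := by
    obtain ⟨σ, ss⟩ := s
    cases hs with
    | node hlen _ => exact hlen ▸ M.rules_wf q σ r hr
  constructor
  · rintro ⟨t₀, h, hsub⟩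
    rwa [(oisub_paramArgs_iff (paramsLT_of_semOI_substX hwf h)).1 hsub]
  · intro h
    exact ⟨u, h, (oisub_paramArgs_iff (paramsLT_of_semOI_substX hwf h)).2 rfl⟩

theorem semOI_call_iff (hs : s.Wf M.rankΓ) {args : List (ST Γ Δ Q)} {u : OT Δ} :
    SemOI M.sel (.node (.call q s) args) u ↔
      ∃ t₀, SemOI M.sel (.node (.call q s) (paramArgs (M.rankQ q))) t₀ ∧
        OISub M.sel args t₀ u := by
  simp only [semOI_call_iff_exists_rule (us := args), semOI_call_paramArgs_iff M hs,
    MTT.sel_apply]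
  constructor
  · rintro ⟨r, hr, t₀, h, hsub⟩
    exact ⟨t₀, ⟨r, hr, h⟩, hsub⟩
  · rintro ⟨t₀, ⟨r, hr, h⟩, hsub⟩
    exact ⟨r, hr, t₀, h, hsub⟩

end Call

/-- `Fill β u v` is `v ∈ u ←_OI (β 0, β 1, …)`. -/
inductive Fill (β : ℕ → Set (RTree Δ)) : OT Δ → RTree Δ → Prop
  | param {i : ℕ} {w : RTree Δ} (hw : w ∈ β i) : Fill β (.node (.param i) []) w
  | out {d : Δ} {us : List (OT Δ)} {ws : List (RTree Δ)} (hlen : us.length = ws.length)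
      (h : ∀ p ∈ us.zip ws, Fill β p.1 p.2) : Fill β (.node (.out d) us) (.node d ws)

section Fill

variable {β : ℕ → Set (RTree Δ)}

theorem fill_param_iff {i : ℕ} {v : RTree Δ} : Fill β (.node (.param i) []) v ↔ v ∈ β i := by
  constructor
  · intro h
    cases h with
    | param hw => exact hw
  · exact .param

theorem fill_out_iff {d : Δ} {us : List (OT Δ)} {v : RTree Δ} :
    Fill β (.node (.out d) us) v ↔ ∃ ws, v = .node d ws ∧ Forall₂ (Fill β) us ws := by
  constructor
  · intro h
    cases h with
    | out hlen h => exact ⟨_, rfl, List.forall₂_iff_zip.2 ⟨hlen, fun hp => h _ hp⟩⟩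
  · rintro ⟨ws, rfl, h⟩
    obtain ⟨hlen, h⟩ := List.forall₂_iff_zip.1 h
    exact .out hlen fun p hp => h hp

theorem Fill.mono {β' : ℕ → Set (RTree Δ)} (hβ : β ≤ β') {u : OT Δ} {v : RTree Δ}
    (h : Fill β u v) : Fill β' u v := by
  induction h with
  | param hw => exact .param (hβ _ hw)
  | out hlen _ ih => exact .out hlen ih

theorem fill_embed : ∀ w : RTree Δ, Fill β (embed w) w := by
  refine RTree.rec_mem fun d ws ih => ?_
  rw [embed, RTree.map_node, fill_out_iff]
  exact ⟨ws, rfl, List.forall₂_map_left_iff.2 (List.forall₂_same.2 ih)⟩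

theorem fill_empty_iff {u : OT Δ} {v : RTree Δ} : Fill (fun _ => ∅) u v ↔ u = embed v := by
  constructor
  · intro h
    induction h with
    | param hw => exact absurd hw (Set.notMem_empty _)
    | @out d us ws hlen _ ih =>
      have : Forall₂ (· = ·) us (ws.map embed) :=
        List.forall₂_map_right_iff.2 (List.forall₂_iff_zip.2 ⟨hlen, fun hp => ih _ hp⟩)
      rw [List.forall₂_eq_eq_eq] at this
      rw [this, embed, RTree.map_node]
      rfl
  · rintro rfl
    exact fill_embed v

end Fill

section Split

variable {rsel : Q → Γ → List (RTree Γ) → Set (Rhs Δ Q)} {β : ℕ → Set (RTree Δ)}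

theorem exists_oisub_of_fill {args : List (ST Γ Δ Q)} {γ : ℕ → Set (RTree Δ)}
    (hγ : ∀ k, ∀ w ∈ γ k, ∃ hk : k < args.length, ∃ u, SemOI rsel args[k] u ∧ Fill β u w)
    {t₀ : OT Δ} {v : RTree Δ} (h : Fill γ t₀ v) : ∃ u, OISub rsel args t₀ u ∧ Fill β u v := by
  induction h with
  | param hw =>
    obtain ⟨hk, u, hsem, hfill⟩ := hγ _ _ hw
    exact ⟨u, oisub_param_iff.2 ⟨hk, hsem⟩, hfill⟩
  | @out d us ws hlen _ ih =>
    obtain ⟨us', hsub, hfill⟩ := List.forall₂_comp_iff.1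
      (List.forall₂_iff_zip.2 ⟨hlen, fun hp => ih _ hp⟩ :
        Forall₂ (Relation.Comp (OISub rsel args) (Fill β)) us ws)
    exact ⟨_, oisub_out_iff.2 ⟨us', rfl, hsub⟩, fill_out_iff.2 ⟨ws, rfl, hfill⟩⟩

def TightFill (R : ℕ → RTree Δ → Prop) (γ : ℕ → Set (RTree Δ)) (t₀ : OT Δ) (v : RTree Δ) :
    Prop :=
  Fill γ t₀ v ∧ (∀ k, (γ k).ncard ≤ countParam k t₀) ∧ ∀ k, ∀ w ∈ γ k, Subtree w v ∧ R k w

theorem exists_forall₂_fill_of_tightFill {R : ℕ → RTree Δ → Prop} {ts : List (OT Δ)}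
    {ws : List (RTree Δ)} (h : Forall₂ (fun t₀ v => ∃ γ, TightFill R γ t₀ v) ts ws) :
    ∃ γ, Forall₂ (Fill γ) ts ws ∧ (∀ k, (γ k).ncard ≤ (ts.map (countParam k)).sum) ∧
      ∀ k, ∀ w ∈ γ k, (∃ v ∈ ws, Subtree w v) ∧ R k w := by
  induction h with
  | nil => exact ⟨⊥, .nil, by simp, by simp⟩
  | cons h _ ih =>
    obtain ⟨γ₁, hfill₁, hcard₁, hmem₁⟩ := h
    obtain ⟨γ₂, hfill₂, hcard₂, hmem₂⟩ := ih
    refine ⟨γ₁ ⊔ γ₂, .cons (hfill₁.mono le_sup_left) (hfill₂.imp fun _ _ => .mono le_sup_right),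
      fun k => ?_, fun k w hw => ?_⟩
    · calc ((γ₁ ⊔ γ₂) k).ncard ≤ (γ₁ k).ncard + (γ₂ k).ncard := Set.ncard_union_le _ _
        _ ≤ _ := by simpa using add_le_add (hcard₁ k) (hcard₂ k)
    · rcases hw with hw | hw
      · exact ⟨⟨_, List.mem_cons_self, (hmem₁ k w hw).1⟩, (hmem₁ k w hw).2⟩
      · obtain ⟨⟨v, hv, hsub⟩, hR⟩ := hmem₂ k w hw
        exact ⟨⟨v, List.mem_cons_of_mem _ hv, hsub⟩, hR⟩

/-- The witness `γ k` collects the subtrees of `v` sitting at the occurrences of `y_k` in `t₀`. -/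
theorem exists_tightFill_of_oisub {args : List (ST Γ Δ Q)} :
    ∀ (t₀ : OT Δ) {u : OT Δ} {v : RTree Δ}, OISub rsel args t₀ u → Fill β u v →
      ∃ γ, TightFill
        (fun k w => ∃ hk : k < args.length, ∃ u', SemOI rsel args[k] u' ∧ Fill β u' w) γ t₀ v := by
  refine RTree.rec_mem fun l ts ih u v hsub hfill => ?_
  cases hsub with
  | @param _ k _ hk hsem =>
    refine ⟨fun j => if j = k then {v} else ∅, .param (by simp), fun j => ?_, fun j w hw => ?_⟩
    · by_cases hj : j = k <;> simp [hj, countParam_param]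
    · by_cases hj : j = k
      · subst hj
        simp only [if_pos, Set.mem_singleton_iff] at hw
        subst hw
        exact ⟨.refl _, hk, u, hsem, hfill⟩
      · simp [hj] at hw
  | @out _ d _ ts' hlen h =>
    obtain ⟨ws, rfl, hws⟩ := fill_out_iff.1 hfill
    have hsplit := List.forall₂_comp_iff.2 ⟨ts', List.forall₂_iff_get_cast.2 ⟨hlen, h⟩, hws⟩
    obtain ⟨γ, hγ, hcard, hmem⟩ := exists_forall₂_fill_of_tightFill
      (hsplit.imp_of_mem fun t ht _ _ ⟨_, hsub, hfill⟩ => ih t ht hsub hfill)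
    refine ⟨γ, fill_out_iff.2 ⟨ws, rfl, hγ⟩, fun k => countParam_out ▸ hcard k, fun k w hw => ?_⟩
    obtain ⟨⟨w', hw', hsub⟩, hR⟩ := hmem k w hw
    exact ⟨hsub.trans (.of_mem hw'), hR⟩

end Split

/-- The invariant of the construction: `(q, β⃗, v') ∈ run_OI(s)` iff
`v' ∈ u ←_OI (β_1, …, β_m)` for some `u ∈ ⟦⟨q,s⟩(y_1,…,y_m)⟧_OI`. -/
def runOISpec (M : MTT Γ Δ Q) (t : RTree Δ) (c : ℕ) (s : RTree Γ) : Set (TripOI Δ Q) :=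
  {trip | trip.2.1.length = M.rankQ trip.1 ∧ (∀ β ∈ trip.2.1, SmallSet t c β) ∧
    Subtree trip.2.2 t ∧
    ∃ u, SemOI M.sel (.node (.call trip.1 s) (paramArgs (M.rankQ trip.1))) u ∧
      Fill (trip.2.1.getD · ∅) u trip.2.2}

section Correctness

variable (M : MTT Γ Δ Q) {c : ℕ} {t : RTree Δ}

theorem exists_mem_runOISpec_iff (hfc : FinCopyP M c) {q : Q} {s : RTree Γ}
    (hs : s.Wf M.rankΓ) {α : Type} {rs : List α} (f : α → ST Γ Δ Q)
    (hrs : rs.length = M.rankQ q) {P : α → RTree Δ → Prop} {β : ℕ → Set (RTree Δ)}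
    (hP : ∀ r ∈ rs, ∀ w, Subtree w t → (P r w ↔ ∃ u, SemOI M.sel (f r) u ∧ Fill β u w))
    {v : RTree Δ} (hv : Subtree v t) :
    (∃ γs, (q, γs, v) ∈ runOISpec M t c s ∧ Forall₂ (fun r γ => ∀ w ∈ γ, P r w) rs γs) ↔
      ∃ u, SemOI M.sel (.node (.call q s) (rs.map f)) u ∧ Fill β u v := by
  constructor
  · rintro ⟨γs, ⟨-, hsmall, -, t₀, hsem, hfill⟩, hγs⟩
    refine (exists_oisub_of_fill (fun k w hw => ?_) hfill).imp
      fun u ⟨hsub, hu⟩ => ⟨(semOI_call_iff M hs).2 ⟨t₀, hsem, hsub⟩, hu⟩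
    obtain ⟨hk, hw⟩ := List.mem_getD_empty_iff.1 hw
    have hk' : k < rs.length := hγs.length_eq ▸ hk
    have hwt := (hsmall _ (List.getElem_mem hk)).1 w hw
    obtain ⟨u, hu, hfill'⟩ := (hP _ (List.getElem_mem hk') w hwt).1 (hγs.get hk' hk w hw)
    exact ⟨by simpa using hk', u, by simpa using hu, hfill'⟩
  · rintro ⟨u, hu, hfill⟩
    obtain ⟨t₀, hsem, hsub⟩ := (semOI_call_iff M hs).1 hu
    obtain ⟨γ, hfillγ, hcard, hmem⟩ := exists_tightFill_of_oisub t₀ hsub hfill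
    have hγ : (fun k => ((List.range rs.length).map γ).getD k ∅) = γ := by
      funext k
      rw [List.getD_map_range]
      split_ifs with hk
      · rfl
      · refine (Set.eq_empty_of_forall_notMem fun w hw => hk ?_).symm
        simpa using (hmem k w hw).2.1
    refine ⟨(List.range rs.length).map γ, ⟨by simp [hrs], ?_, hv, t₀, hsem, ?_⟩, ?_⟩
    · simp only [List.mem_map, List.mem_range]
      rintro _ ⟨k, hk, rfl⟩
      exact ⟨fun w hw => (hmem k w hw).1.trans hv,
        (hcard k).trans (hfc q s hs t₀ hsem k (hrs ▸ hk))⟩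
    · show Fill (fun k => ((List.range rs.length).map γ).getD k ∅) t₀ v
      rwa [hγ]
    · refine List.forall₂_iff_get.2 ⟨by simp, fun k hk _ w hw => ?_⟩
      simp only [List.get_eq_getElem, List.getElem_map, List.getElem_range] at hw
      obtain ⟨hwv, hk', u', hu', hfill'⟩ := hmem k w hw
      exact (hP _ (List.getElem_mem hk) w (hwv.trans hv)).2 ⟨u', by simpa using hu', hfill'⟩

theorem fPredOI_iff_exists_semOI (hfc : FinCopyP M c) {ss : List (RTree Γ)}
    (hss : ∀ s ∈ ss, s.Wf M.rankΓ)
    {m : ℕ} {r : Rhs Δ Q} (hr : RhsWf M.rankΔ M.rankQ ss.length m r)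
    {βs : List (Set (RTree Δ))} {v : RTree Δ} (hv : Subtree v t) :
    FPredOI t βs (ss.map (runOISpec M t c)) r v ↔
      ∃ u, SemOI M.sel (substX ss r) u ∧ Fill (βs.getD · ∅) u v := by
  induction hr generalizing v with
  | @out d rs _ _ ih =>
    rw [fPredOI_out_iff, substX_node]
    constructor
    · rintro ⟨ws, rfl, hws⟩
      obtain ⟨us, hus, hfill⟩ := List.forall₂_comp_iff.1 <| hws.imp_of_mem
        fun r hr w hw => (ih r hr ((Subtree.of_mem hw).trans hv)).1
      exact ⟨_, semOI_out_iff.2 ⟨us, rfl, List.forall₂_map_left_iff.2 hus⟩,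
        fill_out_iff.2 ⟨ws, rfl, hfill⟩⟩
    · rintro ⟨u, hu, hfill⟩
      obtain ⟨us, rfl, hus⟩ := semOI_out_iff.1 hu
      obtain ⟨ws, rfl, hws⟩ := fill_out_iff.1 hfill
      refine ⟨ws, rfl, ?_⟩
      exact (List.forall₂_comp_iff.2 ⟨us, List.forall₂_map_left_iff.1 hus, hws⟩).imp_of_mem
        fun r hr w hw => (ih r hr ((Subtree.of_mem hw).trans hv)).2
  | @call q x rs hx hlen _ ih =>
    have hrun : (ss.map (runOISpec M t c)).getD x ∅ = runOISpec M t c ss[x] := by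
      simp [List.getD_eq_getElem?_getD, hx]
    rw [fPredOI_call_iff, hrun, substX_node, RLab.subst_call hx]
    exact exists_mem_runOISpec_iff M hfc (hss _ (List.getElem_mem hx)) (substX ss) hlen
      (fun r hr w hw => ih r hr hw) hv
  | param =>
    simp [fPredOI_param_iff, substX_node, RLab.subst, semOI_param_iff, fill_param_iff]

theorem runOI_eq_runOISpec (hfc : FinCopyP M c) :
    ∀ s : RTree Γ, s.Wf M.rankΓ → runOI M.rankQ M.sel t c s = runOISpec M t c s := by
  refine RTree.rec_mem fun σ ss ih hs => ?_
  obtain ⟨hlen, hss⟩ : ss.length = M.rankΓ σ ∧ ∀ s ∈ ss, s.Wf M.rankΓ := by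
    cases hs with
    | node hlen hss => exact ⟨hlen, hss⟩
  have hruns :
      ss.attach.map (fun s => runOI M.rankQ M.sel t c s.1) = ss.map (runOISpec M t c) := by
    rw [List.attach_map_val (f := fun s => runOI M.rankQ M.sel t c s)]
    exact List.map_congr_left fun s hs' => ih s hs' (hss s hs')
  ext ⟨q, βs, v⟩
  rw [runOI, hruns]
  simp only [runOISpec, Set.mem_ofPred_eq, semOI_call_paramArgs_iff M hs, MTT.sel_apply]
  refine and_congr_right fun _ => and_congr_right fun _ => and_congr_right fun hv => ?_
  have hr : ∀ r ∈ M.rules q σ, RhsWf M.rankΔ M.rankQ ss.length (M.rankQ q) r :=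
    fun r hr => hlen ▸ M.rules_wf q σ r hr
  constructor
  · rintro ⟨r, hr', hpred⟩
    obtain ⟨u, hu, hfill⟩ := (fPredOI_iff_exists_semOI M hfc hss (hr r hr') hv).1 hpred
    exact ⟨u, ⟨r, hr', hu⟩, hfill⟩
  · rintro ⟨u, ⟨r, hr', hu⟩, hfill⟩
    exact ⟨r, hr', (fPredOI_iff_exists_semOI M hfc hss (hr r hr') hv).2 ⟨u, hu, hfill⟩⟩

end Correctness

/-- Let `M` be an mtt that is finite copying in the parameters
with copying bound `c` and let `t ∈ T_Δ` be a fixed output tree.  Then for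
every `s ∈ T_Σ`: `(s,t) ∈ τ_{OI,M}` iff `(q0, (), t) ∈ run_OI(s)`, where `()`
is the empty parameter vector and `t` itself is the root subtree of `t`. -/
theorem translation_membership_iff_runOI {Γ Δ Q : Type}
    [Fintype Γ] [Fintype Δ] [Fintype Q]
    (M : MTT Γ Δ Q) (c : ℕ) (hfc : FinCopyP M c)
    (t : RTree Δ) (ht : t.Wf M.rankΔ)
    (s : RTree Γ) (hs : s.Wf M.rankΓ) :
    (s, t) ∈ tauOI M.rankΓ M.rankΔ M.sel M.q₀ ↔
      (M.q₀, ([] : List (Set (RTree Δ))), t) ∈ runOI M.rankQ M.sel t c s := by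
  rw [runOI_eq_runOISpec M hfc s hs]
  simp [tauOI, runOISpec, M.q₀_rank, fill_empty_iff, paramArgs, hs, ht, RTree.Subtree.refl]

end MttF
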